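/- arXiv:1406.0947 — 2 statements merged into one kernel-verified Lean document; each statement's English description precedes it below -/
import Mathlib

section
/- For every integer n ≥ 1, the number z(n) of zigzag stacks on [n] satisfies z(n) = Σ_{k=1}^{n} c_k · Σ_{d₁+d₂+⋯+d_k = n−k, d_i ≥ 0} z(d₁)z(d₂)⋯z(d_k), where c_k denotes the number of connected zigzag stacks on [k] (so c₁ = 1 and c_k = k−1 for k ≥ 2) and z(0) = 1. -/
open PowerSeries

namespace Paper

/-- The arc set of a diagram: a finite set of pairs `(i,j)`. -/
abbrev Arcs := Finset (ℕ × ℕ)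

/-- A diagram on `[n] = {1,…,n}`: every arc `(i,j)` satisfies `1 ≤ i < j ≤ n`. -/
def IsDiagram (n : ℕ) (A : Arcs) : Prop :=
  ∀ p ∈ A, 1 ≤ p.1 ∧ p.1 < p.2 ∧ p.2 ≤ n

/-- Two arcs `p = (i₁,j₁)` and `q = (i₂,j₂)` cross if `i₁ < i₂ < j₁ < j₂`. -/
def Crossing (p q : ℕ × ℕ) : Prop :=
  p.1 < q.1 ∧ q.1 < p.2 ∧ p.2 < q.2

/-- A stack on `[n]`: a diagram with no two crossing arcs. -/
def IsStack (n : ℕ) (A : Arcs) : Prop :=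
  IsDiagram n A ∧ ∀ p ∈ A, ∀ q ∈ A, ¬ Crossing p q

/-- Left-degree of vertex `v`: number of arcs `(u,v)` with `u < v`. -/
def ld (A : Arcs) (v : ℕ) : ℕ := (A.filter fun p => p.2 = v).card

/-- Right-degree of vertex `v`: number of arcs `(v,w)` with `v < w`. -/
def rd (A : Arcs) (v : ℕ) : ℕ := (A.filter fun p => p.1 = v).card

/-- Degree of a vertex. -/
def deg (A : Arcs) (v : ℕ) : ℕ := ld A v + rd A v

/-- A zigzag stack: a stack where every vertex has degree ≤ 2 and no vertex has both
positive left-degree and positive right-degree. -/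
def IsZigzag (n : ℕ) (A : Arcs) : Prop :=
  IsStack n A ∧ (∀ v, deg A v ≤ 2) ∧ ∀ v, ¬ (1 ≤ ld A v ∧ 1 ≤ rd A v)

/-- Adjacency in the underlying graph of a diagram. -/
def adj (A : Arcs) (u v : ℕ) : Prop := (u, v) ∈ A ∨ (v, u) ∈ A

/-- `v` lies in the primary component (connected component of vertex 1). -/
def inPrimary (A : Arcs) (v : ℕ) : Prop := Relation.ReflTransGen (adj A) 1 v

/-- The underlying graph on vertex set `[n]` is connected. -/
def ConnectedOn (n : ℕ) (A : Arcs) : Prop :=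
  ∀ u v, 1 ≤ u → u ≤ n → 1 ≤ v → v ≤ n → Relation.ReflTransGen (adj A) u v

/-- Number of stacks on `[n]`. -/
noncomputable def stackCount (n : ℕ) : ℕ := Nat.card {A : Arcs // IsStack n A}

/-- Number of zigzag stacks on `[n]`. -/
noncomputable def zigzagCount (n : ℕ) : ℕ := Nat.card {A : Arcs // IsZigzag n A}

/-- Number of connected zigzag stacks on `[n]`. -/
noncomputable def connZigzagCount (n : ℕ) : ℕ :=
  Nat.card {A : Arcs // IsZigzag n A ∧ ConnectedOn n A}

/-- The ordinary generating function of the numbers of zigzag stacks. -/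
noncomputable def Zgf : PowerSeries ℚ := PowerSeries.mk fun n => (zigzagCount n : ℚ)

/-- The power series variable over ℚ. -/
noncomputable def Xq : PowerSeries ℚ := PowerSeries.X

/-- An `m`-reduced zigzag stack on `[n]`:
(1) `ld(i) + rd(i+m−1) ≤ 2` for `1 ≤ i ≤ n−m+1` (written additively);
(2) if `1 ≤ i < j ≤ n` with `ld(i) > 0` and `rd(j) > 0` then `j − i ≥ m−1`. -/
def MRed (m n : ℕ) (A : Arcs) : Prop :=
  IsZigzag n A ∧
  (∀ i, 1 ≤ i → i + m ≤ n + 1 → ld A i + rd A (i + m - 1) ≤ 2) ∧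
  (∀ i j, 1 ≤ i → i < j → j ≤ n → 0 < ld A i → 0 < rd A j → i + m ≤ j + 1)

/-- An `m`-regular linear stack on `[n]`: every arc has length ≥ m and every vertex has
degree ≤ 2. -/
def RegLinear (m n : ℕ) (A : Arcs) : Prop :=
  IsStack n A ∧ (∀ p ∈ A, p.1 + m ≤ p.2) ∧ ∀ v, deg A v ≤ 2

/-- Number of `m`-reduced zigzag stacks on `[n]`. -/
noncomputable def zm (m n : ℕ) : ℕ := Nat.card {A : Arcs // MRed m n A}

/-- Number of `m`-regular linear stacks on `[n]`. -/
noncomputable def rmc (m n : ℕ) : ℕ := Nat.card {A : Arcs // RegLinear m n A}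

/-- Generating function of `m`-reduced zigzag stacks. -/
noncomputable def Zm (m : ℕ) : PowerSeries ℚ := PowerSeries.mk fun n => (zm m n : ℚ)

/-- Generating function of `m`-regular linear stacks. -/
noncomputable def Rm (m : ℕ) : PowerSeries ℚ := PowerSeries.mk fun n => (rmc m n : ℚ)

/-- Extended left-degree function used to define boundary types. -/
def extLD (A : Arcs) (l a v : ℕ) : ℕ :=
  if v = 0 then a else if v = l + 1 then 0 else ld A v

/-- Extended right-degree function used to define boundary types. -/
def extRD (A : Arcs) (l b v : ℕ) : ℕ :=
  if v = 0 then 0 else if v = l + 1 then b else rd A v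

/-- An `m`-reduced zigzag stack on `[l]` of boundary type `(a,b)`. -/
def BoundaryType (m a b l : ℕ) (A : Arcs) : Prop :=
  MRed m l A ∧
  (∀ i, i + m ≤ l + 2 → extLD A l a i + extRD A l b (i + m - 1) ≤ 2) ∧
  (∀ i j, i < j → j ≤ l + 1 → 0 < extLD A l a i → 0 < extRD A l b j → i + m ≤ j + 1)

/-- Number of boundary-type-`(a,b)` structures on `[n]`. -/
noncomputable def tc (m a b n : ℕ) : ℕ := Nat.card {A : Arcs // BoundaryType m a b n A}

/-- Generating functions `T_i(x)`; types T₁,…,T₆ correspond to `(a,b)` =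
(0,0), (1,0), (1,1), (2,0), (2,1), (2,2). -/
noncomputable def Tgf (m a b : ℕ) : PowerSeries ℚ := PowerSeries.mk fun n => (tc m a b n : ℚ)

/-- Type G : `m`-reduced zigzag stack with `deg(1) ≤ 1`. -/
def TypeG (m n : ℕ) (A : Arcs) : Prop := MRed m n A ∧ deg A 1 ≤ 1

/-- Type H : `m`-reduced zigzag stack with `deg(1) ≤ 1` and `deg(n) ≤ 1`. -/
def TypeH (m n : ℕ) (A : Arcs) : Prop := MRed m n A ∧ deg A 1 ≤ 1 ∧ deg A n ≤ 1

noncomputable def gcnt (m n : ℕ) : ℕ := Nat.card {A : Arcs // TypeG m n A}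
noncomputable def hcnt (m n : ℕ) : ℕ := Nat.card {A : Arcs // TypeH m n A}

/-- Generating function `G(x)`. -/
noncomputable def Ggf (m : ℕ) : PowerSeries ℚ := PowerSeries.mk fun n => (gcnt m n : ℚ)

/-- Generating function `H(x)`. -/
noncomputable def Hgf (m : ℕ) : PowerSeries ℚ := PowerSeries.mk fun n => (hcnt m n : ℚ)

/-- The reduction map θ_m: replace each arc `(i,j)` by `(i, j−m+1)`. -/
def theta (m : ℕ) (A : Arcs) : Arcs := A.image fun p => (p.1, p.2 - m + 1)

/-- Relabel a structure whose arcs lie in `{c+1, …}` down by `c`. -/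
def shiftDown (c : ℕ) (A : Arcs) : Arcs := A.image fun p => (p.1 - c, p.2 - c)

/-- Conditions (1) and (2) of `m`-reducedness restricted to a set `J` of vertices. -/
def CondOn (m : ℕ) (A : Arcs) (J : Finset ℕ) : Prop :=
  (∀ i, i ∈ J → i + m - 1 ∈ J → ld A i + rd A (i + m - 1) ≤ 2) ∧
  (∀ i j, i ∈ J → j ∈ J → i < j → 0 < ld A i → 0 < rd A j → i + m ≤ j + 1)

/-!
A zigzag stack `A` on `[n]` splits along its primary component, the component of vertex `1`.
If its vertices are `1 = p₁ < ⋯ < p_k`, relabelling them `1, …, k` turns the primary arcs into a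
connected zigzag stack on `[k]`. All other arcs lie in the gaps `(pᵢ, pᵢ₊₁)` (with
`p_{k+1} = n + 1`): an arc leaving a gap would have to pass over a primary vertex, and a path
from `1` to that vertex would then cross it. The zigzag conditions only concern the arcs at a
single vertex, so the gap diagrams can be any zigzag stacks on `[dᵢ]`, `Σ dᵢ = n - k`.
Conversely, gluing a connected core and arbitrary gap stacks gives a zigzag stack whose primary
component is the core, so the splitting is a bijection.
-/

open Finset Function Relation

def Noncrossing (A : Arcs) : Prop := ∀ p ∈ A, ∀ q ∈ A, ¬ Crossing p q

def IsZigzagAt (A : Arcs) (v : ℕ) : Prop := deg A v ≤ 2 ∧ ¬ (1 ≤ ld A v ∧ 1 ≤ rd A v)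

theorem isZigzag_iff {n : ℕ} {A : Arcs} :
    IsZigzag n A ↔ IsDiagram n A ∧ Noncrossing A ∧ ∀ v, IsZigzagAt A v := by
  simp only [IsZigzag, IsStack, Noncrossing, IsZigzagAt, forall_and]
  tauto

theorem IsZigzagAt.of_le {A X : Arcs} {v w : ℕ} (h : IsZigzagAt A w) (hl : ld X v ≤ ld A w)
    (hr : rd X v ≤ rd A w) : IsZigzagAt X v := by
  unfold IsZigzagAt deg at *
  omega

section Degrees

variable {A X : Arcs} {v : ℕ}

theorem ld_eq_zero (h : ∀ p ∈ A, p.2 ≠ v) : ld A v = 0 :=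
  card_eq_zero.2 (filter_eq_empty_iff.2 h)

theorem rd_eq_zero (h : ∀ p ∈ A, p.1 ≠ v) : rd A v = 0 :=
  card_eq_zero.2 (filter_eq_empty_iff.2 h)

theorem ld_eq_of_subset (hXA : X ⊆ A) (h : ∀ p ∈ A, p.2 = v → p ∈ X) : ld A v = ld X v := by
  unfold ld
  congr 1
  ext p
  simp only [mem_filter]
  exact ⟨fun hp => ⟨h p hp.1 hp.2, hp.2⟩, fun hp => ⟨hXA hp.1, hp.2⟩⟩

theorem rd_eq_of_subset (hXA : X ⊆ A) (h : ∀ p ∈ A, p.1 = v → p ∈ X) : rd A v = rd X v := by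
  unfold rd
  congr 1
  ext p
  simp only [mem_filter]
  exact ⟨fun hp => ⟨h p hp.1 hp.2, hp.2⟩, fun hp => ⟨hXA hp.1, hp.2⟩⟩

end Degrees

theorem crossing_map_iff {σ : ℕ → ℕ} (hσ : StrictMono σ) {p q : ℕ × ℕ} :
    Crossing (Prod.map σ σ p) (Prod.map σ σ q) ↔ Crossing p q := by
  simp [Crossing, hσ.lt_iff_lt]

def relabel (σ : ℕ → ℕ) (X : Arcs) : Arcs := X.image (Prod.map σ σ)

def pullback (σ : ℕ → ℕ) (m : ℕ) (A : Arcs) : Arcs :=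
  (Icc 1 m ×ˢ Icc 1 m).filter fun q => Prod.map σ σ q ∈ A

section Relabel

variable {σ : ℕ → ℕ} {m : ℕ} {A X : Arcs}

theorem ld_relabel (hσ : Injective σ) (a : ℕ) : ld (relabel σ X) (σ a) = ld X a := by
  unfold ld relabel
  rw [filter_image, card_image_of_injective _ (hσ.prodMap hσ)]
  simp [hσ.eq_iff]

theorem rd_relabel (hσ : Injective σ) (a : ℕ) : rd (relabel σ X) (σ a) = rd X a := by
  unfold rd relabel
  rw [filter_image, card_image_of_injective _ (hσ.prodMap hσ)]
  simp [hσ.eq_iff]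

theorem Noncrossing.relabel (hσ : StrictMono σ) (hX : Noncrossing X) :
    Noncrossing (relabel σ X) := by
  simpa only [Noncrossing, Paper.relabel, forall_mem_image, crossing_map_iff hσ] using hX

theorem mem_pullback {q : ℕ × ℕ} :
    q ∈ pullback σ m A ↔ q.1 ∈ Icc 1 m ∧ q.2 ∈ Icc 1 m ∧ Prod.map σ σ q ∈ A := by
  simp [pullback, and_assoc]

theorem ld_pullback_le (hσ : Injective σ) (a : ℕ) : ld (pullback σ m A) a ≤ ld A (σ a) :=
  card_le_card_of_injOn (Prod.map σ σ)
    (fun q hq => by simp_all [pullback]) (hσ.prodMap hσ).injOn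

theorem rd_pullback_le (hσ : Injective σ) (a : ℕ) : rd (pullback σ m A) a ≤ rd A (σ a) :=
  card_le_card_of_injOn (Prod.map σ σ)
    (fun q hq => by simp_all [pullback]) (hσ.prodMap hσ).injOn

theorem IsZigzag.pullback {n : ℕ} (hσ : StrictMono σ) (hA : IsZigzag n A) :
    IsZigzag m (pullback σ m A) := by
  obtain ⟨hD, hN, hV⟩ := isZigzag_iff.1 hA
  refine isZigzag_iff.2 ⟨fun q hq => ?_, fun q hq q' hq' hc => ?_, fun a => ?_⟩
  · obtain ⟨h1, h2, hq⟩ := mem_pullback.1 hq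
    have := hσ.lt_iff_lt.1 (hD _ hq).2.1
    simp only [mem_Icc] at h1 h2
    omega
  · exact hN _ (mem_pullback.1 hq).2.2 _ (mem_pullback.1 hq').2.2 ((crossing_map_iff hσ).2 hc)
  · exact (hV (σ a)).of_le (ld_pullback_le hσ.injective a) (rd_pullback_le hσ.injective a)

theorem relabel_pullback :
    relabel σ (pullback σ m A) =
      A.filter fun p => p.1 ∈ (Icc 1 m).image σ ∧ p.2 ∈ (Icc 1 m).image σ := by
  ext ⟨x, y⟩
  simp only [relabel, pullback, mem_image, mem_filter, mem_product, Prod.exists, Prod.map,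
    Prod.mk.injEq]
  constructor
  · rintro ⟨a, b, ⟨⟨ha, hb⟩, hab⟩, rfl, rfl⟩
    exact ⟨hab, ⟨a, ha, rfl⟩, ⟨b, hb, rfl⟩⟩
  · rintro ⟨hxy, ⟨a, ha, rfl⟩, ⟨b, hb, rfl⟩⟩
    exact ⟨a, b, ⟨⟨ha, hb⟩, hxy⟩, rfl, rfl⟩

theorem map_mem_relabel {p : ℕ × ℕ} (hp : p ∈ X) : Prod.map σ σ p ∈ relabel σ X :=
  mem_image_of_mem _ hp

theorem adj_mono (hXA : X ⊆ A) {a b : ℕ} (h : adj X a b) : adj A a b :=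
  h.imp (@hXA _) (@hXA _)

theorem adj_relabel {a b : ℕ} (h : adj X a b) : adj (relabel σ X) (σ a) (σ b) :=
  h.imp map_mem_relabel map_mem_relabel

end Relabel

section Paths

variable {A : Arcs}

theorem reflTransGen_adj_symm {a b : ℕ} (h : ReflTransGen (adj A) a b) :
    ReflTransGen (adj A) b a := by
  induction h with
  | refl => exact .refl
  | tail _ hyz ih => exact ih.head hyz.symm

theorem inPrimary_fst_iff {p : ℕ × ℕ} (hp : p ∈ A) : inPrimary A p.1 ↔ inPrimary A p.2 :=
  ⟨fun h => h.tail (Or.inl hp), fun h => h.tail (Or.inr hp)⟩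

open Classical in
noncomputable def primarySet (n : ℕ) (A : Arcs) : Finset ℕ := (Icc 1 n).filter (inPrimary A)

theorem mem_primarySet {n v : ℕ} : v ∈ primarySet n A ↔ v ∈ Icc 1 n ∧ inPrimary A v := by
  simp [primarySet]

theorem primarySet_subset {n : ℕ} : primarySet n A ⊆ Icc 1 n := fun _ h => (mem_primarySet.1 h).1

theorem mem_of_reflTransGen {S : Set ℕ} (hS : ∀ p ∈ A, p.1 ∈ S ↔ p.2 ∈ S) {x y : ℕ}
    (h : ReflTransGen (adj A) x y) (hx : x ∈ S) : y ∈ S := by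
  induction h with
  | refl => exact hx
  | tail _ hyz ih => exact hyz.elim (fun h => (hS _ h).1 ih) (fun h => (hS _ h).2 ih)

theorem reflTransGen_pullback {σ : ℕ → ℕ} {m : ℕ} (hσ : Injective σ)
    (hS : ∀ p ∈ A, p.1 ∈ (Icc 1 m).image σ ↔ p.2 ∈ (Icc 1 m).image σ) {a b : ℕ}
    (ha : a ∈ Icc 1 m) (h : ReflTransGen (adj A) (σ a) (σ b)) :
    ReflTransGen (adj (pullback σ m A)) a b := by
  suffices ∀ y, ReflTransGen (adj A) (σ a) y →
      ∃ c ∈ Icc 1 m, σ c = y ∧ ReflTransGen (adj (pullback σ m A)) a c by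
    obtain ⟨c, -, hc, hac⟩ := this _ h
    rwa [← hσ hc]
  intro y hy
  induction hy with
  | refl => exact ⟨a, ha, rfl, .refl⟩
  | tail _ hyz ih =>
    obtain ⟨c, hc, rfl, hac⟩ := ih
    rcases hyz with h | h
    · obtain ⟨e, he, rfl⟩ := mem_image.1 ((hS _ h).1 (mem_image_of_mem σ hc))
      exact ⟨e, he, rfl, hac.tail (Or.inl (mem_pullback.2 ⟨hc, he, h⟩))⟩
    · obtain ⟨e, he, rfl⟩ := mem_image.1 ((hS _ h).2 (mem_image_of_mem σ hc))
      exact ⟨e, he, rfl, hac.tail (Or.inr (mem_pullback.2 ⟨he, hc, h⟩))⟩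

theorem mem_Ioo_of_reflTransGen {n : ℕ} (hA : IsStack n A) {p : ℕ × ℕ} (hp : p ∈ A) {x y : ℕ}
    (h : ReflTransGen (adj A) x y) (hx : x ∈ Set.Ioo p.1 p.2)
    (hend : ¬ ReflTransGen (adj A) x p.1) : y ∈ Set.Ioo p.1 p.2 := by
  induction h with
  | refl => exact hx
  | @tail y z hxy hyz ih =>
    have hz1 : z ≠ p.1 := fun hz => hend (hz ▸ hxy.tail hyz)
    have hz2 : z ≠ p.2 := fun hz => hend ((hz ▸ hxy.tail hyz).tail (Or.inr hp))
    rw [Set.mem_Ioo] at ih ⊢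
    rcases hyz with h | h
    · have := (hA.1 _ h).2.1
      have := hA.2 p hp _ h
      simp only [Crossing] at this
      omega
    · have := (hA.1 _ h).2.1
      have := hA.2 _ h p hp
      simp only [Crossing] at this
      omega

theorem notMem_Ioo_of_inPrimary {n : ℕ} (hA : IsStack n A) {p : ℕ × ℕ} (hp : p ∈ A)
    (hp1 : ¬ inPrimary A p.1) {w : ℕ} (hw : inPrimary A w) : w ∉ Set.Ioo p.1 p.2 := fun hwp => by
  have h1 := mem_Ioo_of_reflTransGen hA hp (reflTransGen_adj_symm hw) hwp
    fun h => hp1 (hw.trans h)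
  exact (hA.1 p hp).1.not_gt h1.1

end Paths

section CorePos

variable {k : ℕ}

/-- Position of the `j`-th core vertex when the gap after core vertex `i + 1` holds `d i`
vertices. -/
def corePos (d : Fin k → ℕ) (j : ℕ) : ℕ :=
  j + ∑ i ∈ range (j - 1), if h : i < k then d ⟨i, h⟩ else 0

variable (d : Fin k → ℕ)

theorem corePos_one : corePos d 1 = 1 := by simp [corePos]

theorem corePos_strictMono : StrictMono (corePos d) := by
  refine strictMono_nat_of_lt_succ fun j => ?_
  have : ∑ i ∈ range (j - 1), (if h : i < k then d ⟨i, h⟩ else 0) ≤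
      ∑ i ∈ range (j + 1 - 1), (if h : i < k then d ⟨i, h⟩ else 0) :=
    sum_le_sum_of_subset (range_subset_range.2 (by omega))
  unfold corePos
  omega

theorem corePos_succ (i : Fin k) : corePos d (i + 2) = corePos d (i + 1) + d i + 1 := by
  simp [corePos, sum_range_succ]
  omega

theorem corePos_last : corePos d (k + 1) = k + 1 + ∑ i, d i := by
  simp [corePos, ← Fin.sum_univ_eq_sum_range]

theorem exists_gap {v : ℕ} (hv1 : 1 ≤ v) (hv : v < corePos d (k + 1))
    (hvc : v ∉ (Icc 1 k).image (corePos d)) :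
    ∃ i : Fin k, corePos d (i + 1) < v ∧ v < corePos d (i + 2) := by
  classical
  have hex : ∃ j, v < corePos d j := ⟨_, hv⟩
  have hjv : v < corePos d (Nat.find hex) := Nat.find_spec hex
  have hjk : Nat.find hex ≤ k + 1 := Nat.find_min' hex hv
  have hj2 : 2 ≤ Nat.find hex := by
    by_contra h
    interval_cases h : Nat.find hex
    · simp [corePos] at hjv
    · rw [corePos_one] at hjv
      omega
  have hprev : corePos d (Nat.find hex - 1) ≤ v := not_lt.1 (Nat.find_min hex (by omega))
  have hne : corePos d (Nat.find hex - 1) ≠ v :=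
    fun h => hvc (mem_image.2 ⟨_, mem_Icc.2 ⟨by omega, by omega⟩, h⟩)
  refine ⟨⟨Nat.find hex - 2, by omega⟩, ?_, ?_⟩
  · rw [show Nat.find hex - 2 + 1 = Nat.find hex - 1 by omega]
    omega
  · rwa [show Nat.find hex - 2 + 2 = Nat.find hex by omega]

theorem corePos_gaps {E : ℕ → ℕ} (hE0 : E 0 = 1) (hE : ∀ j < k, E j < E (j + 1)) :
    ∀ j ≤ k, corePos (fun i : Fin k => E (i + 1) - E i - 1) (j + 1) = E j := by
  intro j hj
  induction j with
  | zero => rw [corePos_one, hE0]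
  | succ j ih =>
    rw [corePos_succ _ ⟨j, by omega⟩, ih (by omega)]
    have := hE j (by omega)
    simp only
    omega

theorem exists_image_corePos_eq {n : ℕ} {P : Finset ℕ} (hP : P ⊆ Icc 1 n) (h1 : 1 ∈ P) :
    ∃ d : Fin P.card → ℕ, P.card + ∑ i, d i = n ∧ (Icc 1 P.card).image (corePos d) = P := by
  have hk : 0 < P.card := card_pos.2 ⟨1, h1⟩
  have heP : ∀ j, P.orderEmbOfFin rfl j ∈ P := P.orderEmbOfFin_mem rfl
  -- the core positions, followed by the sentinel `n + 1`
  let E : ℕ → ℕ := fun j => if h : j < P.card then P.orderEmbOfFin rfl ⟨j, h⟩ else n + 1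
  have hE0 : E 0 = 1 := by
    simp only [E, dif_pos hk, orderEmbOfFin_zero]
    exact le_antisymm (P.min'_le 1 h1) (mem_Icc.1 (hP (P.min'_mem ⟨1, h1⟩))).1
  have hE : ∀ j < P.card, E j < E (j + 1) := by
    intro j hj
    by_cases hj' : j + 1 < P.card
    · simp only [E, dif_pos hj, dif_pos hj']
      exact (P.orderEmbOfFin rfl).strictMono (Fin.mk_lt_mk.2 (by omega))
    · simp only [E, dif_pos hj, dif_neg hj']
      have := mem_Icc.1 (hP (heP ⟨j, hj⟩))
      omega
  have hpos := corePos_gaps hE0 hE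
  refine ⟨fun i => E (i + 1) - E i - 1, ?_, eq_of_subset_of_card_le (fun x hx => ?_) ?_⟩
  · have := corePos_last (fun i : Fin P.card => E (i + 1) - E i - 1)
    have := hpos _ le_rfl
    have hlast : E P.card = n + 1 := by simp [E]
    beta_reduce
    omega
  · obtain ⟨j, hj, rfl⟩ := mem_image.1 hx
    obtain ⟨hj1, hjk⟩ := mem_Icc.1 hj
    rw [show j = j - 1 + 1 by omega, hpos _ (by omega)]
    simp only [E, dif_pos (show j - 1 < P.card by omega)]
    exact heP _
  · rw [card_image_of_injective _ (corePos_strictMono _).injective, Nat.card_Icc]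
    omega

theorem eq_of_image_corePos_eq {d d' : Fin k → ℕ}
    (h : (Icc 1 k).image (corePos d) = (Icc 1 k).image (corePos d'))
    (hs : ∑ i, d i = ∑ i, d' i) : d = d' := by
  have hmono : ∀ d : Fin k → ℕ, StrictMono fun j : Fin k => corePos d (j + 1) :=
    fun d a b hab => corePos_strictMono d (by simpa using hab)
  have hrange : ∀ d : Fin k → ℕ,
      Set.range (fun j : Fin k => corePos d (j + 1)) = (Icc 1 k).image (corePos d) := by
    intro d
    ext x
    simp only [Set.mem_range, coe_image, coe_Icc, Set.mem_image, Set.mem_Icc]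
    constructor
    · rintro ⟨j, rfl⟩
      exact ⟨j + 1, ⟨by omega, by omega⟩, rfl⟩
    · rintro ⟨a, ⟨h1, h2⟩, rfl⟩
      exact ⟨⟨a - 1, by omega⟩, by simp only; congr 1; omega⟩
  have heq := ((hmono d).range_inj (hmono d')).1 (by rw [hrange, hrange, h])
  have hall : ∀ j, 1 ≤ j → j ≤ k + 1 → corePos d j = corePos d' j := by
    intro j hj1 hj2
    rcases Nat.lt_or_ge j (k + 1) with hj | hj
    · have := congrFun heq ⟨j - 1, by omega⟩
      simp only at this
      rwa [show j - 1 + 1 = j by omega] at this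
    · rw [show j = k + 1 by omega, corePos_last, corePos_last, hs]
  funext i
  have := corePos_succ d i
  have := corePos_succ d' i
  have := hall (i + 1) (by omega) (by omega)
  have := hall (i + 2) (by omega) (by omega)
  omega

end CorePos

def Interleave (S T : Finset ℕ) : Prop :=
  ∃ a ∈ S, ∃ x ∈ S, ∃ b ∈ T, ∃ y ∈ T, Crossing (a, x) (b, y)

section GlueAlong

variable {ι : Type*} (σ : ι → ℕ → ℕ) (m : ι → ℕ)

def block (c : ι) : Finset ℕ := (Icc 1 (m c)).image (σ c)

variable {σ m} {X : ι → Arcs} {A : Arcs}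

theorem mem_block_of_mem_relabel {c : ι} (hX : IsDiagram (m c) (X c)) {p : ℕ × ℕ}
    (hp : p ∈ relabel (σ c) (X c)) : p.1 ∈ block σ m c ∧ p.2 ∈ block σ m c := by
  obtain ⟨q, hq, rfl⟩ := mem_image.1 hp
  obtain ⟨h1, h2, h3⟩ := hX q hq
  exact ⟨mem_image_of_mem _ (mem_Icc.2 ⟨h1, by omega⟩),
    mem_image_of_mem _ (mem_Icc.2 ⟨by omega, h3⟩)⟩

variable (σ) [Fintype ι]

def glueAlong (X : ι → Arcs) : Arcs := univ.biUnion fun c => relabel (σ c) (X c)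

variable {σ}

theorem mem_relabel_of_mem_glueAlong (hX : ∀ c, IsDiagram (m c) (X c))
    (hdisj : Pairwise (Disjoint on block σ m)) {p : ℕ × ℕ} (hp : p ∈ glueAlong σ X) {c : ι}
    (hc : p.1 ∈ block σ m c ∨ p.2 ∈ block σ m c) : p ∈ relabel (σ c) (X c) := by
  obtain ⟨c', -, hp'⟩ := mem_biUnion.1 hp
  obtain rfl : c' = c := by
    by_contra hne
    have hpc' := mem_block_of_mem_relabel (hX c') hp'
    exact hc.elim (disjoint_left.1 (hdisj hne) hpc'.1) (disjoint_left.1 (hdisj hne) hpc'.2)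
  exact hp'

theorem mem_block_iff_of_mem_glueAlong (hX : ∀ c, IsDiagram (m c) (X c))
    (hdisj : Pairwise (Disjoint on block σ m)) {p : ℕ × ℕ} (hp : p ∈ glueAlong σ X) (c : ι) :
    p.1 ∈ block σ m c ↔ p.2 ∈ block σ m c :=
  ⟨fun h => (mem_block_of_mem_relabel (hX c) (mem_relabel_of_mem_glueAlong hX hdisj hp
      (.inl h))).2,
    fun h => (mem_block_of_mem_relabel (hX c) (mem_relabel_of_mem_glueAlong hX hdisj hp
      (.inr h))).1⟩

theorem isZigzagAt_glueAlong (hσ : ∀ c, Injective (σ c)) (hdisj : Pairwise (Disjoint on block σ m))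
    (hX : ∀ c, IsZigzag (m c) (X c)) (v : ℕ) : IsZigzagAt (glueAlong σ X) v := by
  have hD c : IsDiagram (m c) (X c) := (hX c).1.1
  by_cases hv : ∃ c, v ∈ block σ m c
  · obtain ⟨c, hv⟩ := hv
    obtain ⟨a, -, rfl⟩ := mem_image.1 hv
    have hsub : relabel (σ c) (X c) ⊆ glueAlong σ X := fun p hp => mem_biUnion.2 ⟨c, mem_univ _, hp⟩
    have hl := ld_eq_of_subset hsub fun p hp h =>
      mem_relabel_of_mem_glueAlong hD hdisj hp (.inr (h ▸ hv))
    have hr := rd_eq_of_subset hsub fun p hp h =>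
      mem_relabel_of_mem_glueAlong hD hdisj hp (.inl (h ▸ hv))
    rw [ld_relabel (hσ c)] at hl
    rw [rd_relabel (hσ c)] at hr
    exact ((isZigzag_iff.1 (hX c)).2.2 a).of_le hl.le hr.le
  · simp only [not_exists] at hv
    have hends : ∀ p ∈ glueAlong σ X, p.1 ≠ v ∧ p.2 ≠ v := by
      intro p hp
      obtain ⟨c, -, hpc⟩ := mem_biUnion.1 hp
      have := mem_block_of_mem_relabel (hD c) hpc
      exact ⟨fun h => hv c (h ▸ this.1), fun h => hv c (h ▸ this.2)⟩
    simp [IsZigzagAt, deg, ld_eq_zero fun p hp => (hends p hp).2,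
      rd_eq_zero fun p hp => (hends p hp).1]

theorem noncrossing_glueAlong (hσ : ∀ c, StrictMono (σ c)) (hX : ∀ c, IsZigzag (m c) (X c))
    (hinter : Pairwise fun c c' => ¬ Interleave (block σ m c) (block σ m c')) :
    Noncrossing (glueAlong σ X) := by
  intro p hp q hq hpq
  obtain ⟨c, -, hpc⟩ := mem_biUnion.1 hp
  obtain ⟨c', -, hqc⟩ := mem_biUnion.1 hq
  by_cases hcc : c = c'
  · subst hcc
    exact (isZigzag_iff.1 (hX c)).2.1.relabel (hσ c) p hpc q hqc hpq
  · have hp' := mem_block_of_mem_relabel (hX c).1.1 hpc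
    have hq' := mem_block_of_mem_relabel (hX c').1.1 hqc
    exact hinter hcc ⟨_, hp'.1, _, hp'.2, _, hq'.1, _, hq'.2, hpq⟩

theorem isZigzag_glueAlong {n : ℕ} (hσ : ∀ c, StrictMono (σ c))
    (hdisj : Pairwise (Disjoint on block σ m))
    (hinter : Pairwise fun c c' => ¬ Interleave (block σ m c) (block σ m c'))
    (hsub : ∀ c, block σ m c ⊆ Icc 1 n) (hX : ∀ c, IsZigzag (m c) (X c)) :
    IsZigzag n (glueAlong σ X) := by
  refine isZigzag_iff.2 ⟨fun p hp => ?_, noncrossing_glueAlong hσ hX hinter,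
    isZigzagAt_glueAlong (fun c => (hσ c).injective) hdisj hX⟩
  obtain ⟨c, -, hpc⟩ := mem_biUnion.1 hp
  have hends := mem_block_of_mem_relabel (hX c).1.1 hpc
  obtain ⟨q, hq, rfl⟩ := mem_image.1 hpc
  exact ⟨(mem_Icc.1 (hsub c hends.1)).1, hσ c ((hX c).1.1 q hq).2.1, (mem_Icc.1 (hsub c hends.2)).2⟩

theorem pullback_glueAlong (hσ : ∀ c, Injective (σ c)) (hX : ∀ c, IsDiagram (m c) (X c))
    (hdisj : Pairwise (Disjoint on block σ m)) (c : ι) :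
    pullback (σ c) (m c) (glueAlong σ X) = X c := by
  ext q
  rw [mem_pullback]
  constructor
  · rintro ⟨h1, -, hq⟩
    exact ((hσ c).prodMap (hσ c)).mem_finset_image.1
      (mem_relabel_of_mem_glueAlong hX hdisj hq (.inl (mem_image_of_mem _ h1)))
  · intro hq
    obtain ⟨h1, h2, h3⟩ := hX c q hq
    exact ⟨mem_Icc.2 ⟨h1, by omega⟩, mem_Icc.2 ⟨by omega, h3⟩,
      mem_biUnion.2 ⟨c, mem_univ _, map_mem_relabel hq⟩⟩

theorem glueAlong_pullback (h : ∀ p ∈ A, ∃ c, p.1 ∈ block σ m c ∧ p.2 ∈ block σ m c) :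
    glueAlong σ (fun c => pullback (σ c) (m c) A) = A := by
  ext p
  simp only [glueAlong, mem_biUnion, mem_univ, true_and, relabel_pullback, mem_filter]
  exact ⟨fun ⟨_, hp, _⟩ => hp, fun hp => (h p hp).imp fun _ hc => ⟨hp, hc⟩⟩

end GlueAlong

/-- Block `none` holds the core, block `some i` the gap after core vertex `i + 1`. -/
def blockEmb {k : ℕ} (d : Fin k → ℕ) : Option (Fin k) → ℕ → ℕ
  | none => corePos d
  | some i => (· + corePos d (i + 1))

def blockSize {k : ℕ} (d : Fin k → ℕ) : Option (Fin k) → ℕ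
  | none => k
  | some i => d i

def glue {k : ℕ} (B : Arcs) (d : Fin k → ℕ) (f : Fin k → Arcs) : Arcs :=
  glueAlong (blockEmb d) fun c => c.elim B f

section Glue

variable {k : ℕ} (d : Fin k → ℕ)

theorem blockEmb_strictMono : ∀ c, StrictMono (blockEmb d c)
  | none => corePos_strictMono d
  | some _ => fun _ _ h => Nat.add_lt_add_right h _

theorem block_none : block (blockEmb d) (blockSize d) none = (Icc 1 k).image (corePos d) := rfl

theorem mem_block_some {i : Fin k} {x : ℕ} :
    x ∈ block (blockEmb d) (blockSize d) (some i) ↔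
      corePos d (i + 1) < x ∧ x < corePos d (i + 2) := by
  rw [corePos_succ]
  simp only [block, blockEmb, blockSize, mem_image, mem_Icc]
  constructor
  · rintro ⟨a, ⟨h1, h2⟩, rfl⟩
    omega
  · intro h
    exact ⟨x - corePos d (i + 1), ⟨by omega, by omega⟩, by omega⟩

theorem pairwise_disjoint_block : Pairwise (Disjoint on block (blockEmb d) (blockSize d)) := by
  have hmono := corePos_strictMono d
  have hcore : ∀ (i : Fin k) x, x ∈ block (blockEmb d) (blockSize d) none →
      x ∉ block (blockEmb d) (blockSize d) (some i) := by
    intro i x hx hxi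
    rw [block_none] at hx
    obtain ⟨j, hj, rfl⟩ := mem_image.1 hx
    rw [mem_block_some, hmono.lt_iff_lt, hmono.lt_iff_lt] at hxi
    omega
  have hgaps : ∀ i j : Fin k, i < j → ∀ x, x ∈ block (blockEmb d) (blockSize d) (some i) →
      x ∉ block (blockEmb d) (blockSize d) (some j) := by
    intro i j hij x hi hj
    rw [mem_block_some] at hi hj
    have := hmono.monotone (show i.1 + 2 ≤ j.1 + 1 by omega)
    omega
  rintro (_ | i) (_ | j) hne <;> rw [Function.onFun, disjoint_left]
  · exact absurd rfl hne
  · exact hcore j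
  · exact fun x hi hx => hcore i x hx hi
  · rcases lt_trichotomy i j with h | rfl | h
    · exact hgaps i j h
    · exact absurd rfl hne
    · exact fun x hi hj => hgaps j i h x hj hi

/-- The gaps are intervals, so no block interleaves with another. -/
theorem pairwise_not_interleave_block :
    Pairwise fun c c' => ¬ Interleave (block (blockEmb d) (blockSize d) c)
      (block (blockEmb d) (blockSize d) c') := by
  rintro c c' hne ⟨a, ha, x, hx, b, hb, y, hy, h1, h2, h3⟩
  have hdisj := disjoint_left.1 (pairwise_disjoint_block d hne)
  cases c with
  | some i =>
    rw [mem_block_some] at ha hx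
    exact hdisj ((mem_block_some d).2 ⟨by omega, by omega⟩) hb
  | none =>
    cases c' with
    | none => exact hne rfl
    | some j =>
      rw [mem_block_some] at hb hy
      exact hdisj hx ((mem_block_some d).2 ⟨by omega, by omega⟩)

theorem block_subset (c : Option (Fin k)) :
    block (blockEmb d) (blockSize d) c ⊆ Icc 1 (k + ∑ i, d i) := by
  intro x hx
  have hlast := corePos_last d
  have hmono := corePos_strictMono d
  rw [mem_Icc]
  cases c with
  | none =>
    rw [block_none] at hx
    obtain ⟨j, hj, rfl⟩ := mem_image.1 hx
    rw [mem_Icc] at hj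
    have := hmono.monotone hj.1
    have := hmono (show j < k + 1 by omega)
    rw [corePos_one] at *
    omega
  | some i =>
    rw [mem_block_some] at hx
    have := hmono.monotone (show i.1 + 2 ≤ k + 1 by omega)
    omega

variable {d} {B : Arcs} {f : Fin k → Arcs}

theorem isDiagram_optionElim (hB : IsDiagram k B) (hf : ∀ i, IsDiagram (d i) (f i)) :
    ∀ c, IsDiagram (blockSize d c) (c.elim B f)
  | none => hB
  | some i => hf i

theorem isZigzag_glue (hB : IsZigzag k B) (hf : ∀ i, IsZigzag (d i) (f i)) :
    IsZigzag (k + ∑ i, d i) (glue B d f) :=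
  isZigzag_glueAlong (blockEmb_strictMono d) (pairwise_disjoint_block d)
    (pairwise_not_interleave_block d) (block_subset d) fun c => by cases c; exacts [hB, hf _]

theorem primarySet_glue (hk : 1 ≤ k) (hB : IsDiagram k B) (hBc : ConnectedOn k B)
    (hf : ∀ i, IsDiagram (d i) (f i)) :
    primarySet (k + ∑ i, d i) (glue B d f) = (Icc 1 k).image (corePos d) := by
  ext v
  rw [mem_primarySet]
  constructor
  · rintro ⟨-, hv⟩
    have h1 : 1 ∈ (Icc 1 k).image (corePos d) :=
      mem_image.2 ⟨1, mem_Icc.2 ⟨le_rfl, hk⟩, corePos_one d⟩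
    exact mem_of_reflTransGen (S := ↑(block (blockEmb d) (blockSize d) none))
      (fun p hp => mem_block_iff_of_mem_glueAlong (isDiagram_optionElim hB hf)
        (pairwise_disjoint_block d) hp none) hv h1
  · intro hv
    refine ⟨block_subset d none hv, ?_⟩
    obtain ⟨a, ha, rfl⟩ := mem_image.1 hv
    obtain ⟨ha1, hak⟩ := mem_Icc.1 ha
    have hcore : relabel (corePos d) B ⊆ glue B d f :=
      fun p hp => mem_biUnion.2 ⟨none, mem_univ _, hp⟩
    have hpath : ReflTransGen (adj (relabel (corePos d) B)) (corePos d 1) (corePos d a) :=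
      ReflTransGen.lift (corePos d) (fun _ _ h => adj_relabel h) _ _ (hBc 1 a le_rfl hk ha1 hak)
    rw [corePos_one] at hpath
    exact ReflTransGen.mono (fun _ _ => adj_mono hcore) _ _ hpath

theorem pullback_glue_none (hB : IsDiagram k B) (hf : ∀ i, IsDiagram (d i) (f i)) :
    pullback (corePos d) k (glue B d f) = B :=
  pullback_glueAlong (fun c => (blockEmb_strictMono d c).injective) (isDiagram_optionElim hB hf)
    (pairwise_disjoint_block d) none

theorem pullback_glue_some (hB : IsDiagram k B) (hf : ∀ i, IsDiagram (d i) (f i)) (i : Fin k) :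
    pullback (· + corePos d (i + 1)) (d i) (glue B d f) = f i :=
  pullback_glueAlong (fun c => (blockEmb_strictMono d c).injective) (isDiagram_optionElim hB hf)
    (pairwise_disjoint_block d) (some i)

end Glue

section Decomposition

variable {n k : ℕ} {A : Arcs}

theorem connectedOn_pullback {σ : ℕ → ℕ} (hσ : Injective σ) (hA : IsDiagram n A)
    (himg : (Icc 1 k).image σ = primarySet n A) : ConnectedOn k (pullback σ k A) := by
  intro u v hu1 huk hv1 hvk
  have hS : ∀ p ∈ A, p.1 ∈ (Icc 1 k).image σ ↔ p.2 ∈ (Icc 1 k).image σ := by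
    intro p hp
    obtain ⟨h1, h12, h2⟩ := hA p hp
    simp only [himg, mem_primarySet, mem_Icc, inPrimary_fst_iff hp]
    exact and_congr_left fun _ => by omega
  have hprim : ∀ w ∈ Icc 1 k, inPrimary A (σ w) := fun w hw =>
    (mem_primarySet.1 (himg ▸ mem_image_of_mem σ hw)).2
  exact reflTransGen_pullback hσ hS (mem_Icc.2 ⟨hu1, huk⟩) <|
    (reflTransGen_adj_symm (hprim u (mem_Icc.2 ⟨hu1, huk⟩))).trans
      (hprim v (mem_Icc.2 ⟨hv1, hvk⟩))

/-- By noncrossing, an arc not in the primary component cannot pass over a primary vertex,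
so it stays inside one gap. -/
theorem exists_block_of_mem (hA : IsStack n A) {d : Fin k → ℕ} (hsum : k + ∑ i, d i = n)
    (himg : (Icc 1 k).image (corePos d) = primarySet n A) {p : ℕ × ℕ} (hp : p ∈ A) :
    ∃ c, p.1 ∈ block (blockEmb d) (blockSize d) c ∧ p.2 ∈ block (blockEmb d) (blockSize d) c := by
  obtain ⟨h1, h12, h2⟩ := hA.1 p hp
  have hlast : corePos d (k + 1) = n + 1 := by rw [corePos_last]; omega
  by_cases hprim : inPrimary A p.1
  · refine ⟨none, ?_, ?_⟩ <;> rw [block_none, himg, mem_primarySet, mem_Icc]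
    · exact ⟨⟨h1, by omega⟩, hprim⟩
    · exact ⟨⟨by omega, h2⟩, (inPrimary_fst_iff hp).1 hprim⟩
  · obtain ⟨i, hi1, hi2⟩ := exists_gap d h1 (by omega)
      (by rw [himg, mem_primarySet]; exact fun h => hprim h.2)
    refine ⟨some i, (mem_block_some d).2 ⟨hi1, hi2⟩, (mem_block_some d).2 ⟨by omega, ?_⟩⟩
    by_contra hge
    have hik : i.1 + 2 ≤ k := by
      by_contra h
      rw [show i.1 + 2 = k + 1 by omega] at hge
      omega
    have hw : inPrimary A (corePos d (i + 2)) := by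
      have := mem_image_of_mem (corePos d) (mem_Icc.2 (show 1 ≤ i.1 + 2 ∧ i.1 + 2 ≤ k by omega))
      exact (mem_primarySet.1 (himg ▸ this)).2
    rcases (not_lt.1 hge).lt_or_eq with hlt | heq
    · exact notMem_Ioo_of_inPrimary hA hp hprim hw ⟨by omega, hlt⟩
    · exact hprim ((inPrimary_fst_iff hp).2 (heq ▸ hw))

end Decomposition

section Counting

open Classical in
noncomputable def diagramsWith (n : ℕ) (Q : Arcs → Prop) : Finset Arcs :=
  (Icc 1 n ×ˢ Icc 1 n).powerset.filter Q

variable {n : ℕ} {Q : Arcs → Prop}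

theorem mem_diagramsWith (hQ : ∀ A, Q A → IsDiagram n A) {A : Arcs} :
    A ∈ diagramsWith n Q ↔ Q A := by
  simp only [diagramsWith, mem_filter, mem_powerset, and_iff_right_iff_imp]
  intro hA p hp
  obtain ⟨h1, h2, h3⟩ := hQ A hA p hp
  simp only [mem_product, mem_Icc]
  omega

theorem card_diagramsWith (hQ : ∀ A, Q A → IsDiagram n A) :
    (diagramsWith n Q).card = Nat.card {A // Q A} :=
  calc _ = Nat.card (diagramsWith n Q) := (Nat.card_eq_finsetCard _).symm
    _ = _ := Nat.card_congr (Equiv.subtypeEquivRight fun _ => mem_diagramsWith hQ)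

theorem mem_diagramsWith_isZigzag {A : Arcs} : A ∈ diagramsWith n (IsZigzag n) ↔ IsZigzag n A :=
  mem_diagramsWith fun _ h => h.1.1

theorem mem_diagramsWith_connected {A : Arcs} :
    A ∈ diagramsWith n (fun B => IsZigzag n B ∧ ConnectedOn n B) ↔ IsZigzag n A ∧ ConnectedOn n A :=
  mem_diagramsWith fun _ h => h.1.1.1

theorem card_diagramsWith_isZigzag : (diagramsWith n (IsZigzag n)).card = zigzagCount n :=
  card_diagramsWith fun _ h => h.1.1

theorem card_diagramsWith_connected :
    (diagramsWith n fun B => IsZigzag n B ∧ ConnectedOn n B).card = connZigzagCount n :=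
  card_diagramsWith fun _ h => h.1.1.1

noncomputable def decompositions (n : ℕ) : Finset (Σ k, Arcs × Σ _ : Fin k → ℕ, Fin k → Arcs) :=
  (Icc 1 n).sigma fun k => diagramsWith k (fun B => IsZigzag k B ∧ ConnectedOn k B) ×ˢ
    ((Nat.antidiagonalTuple k (n - k)).sigma fun d =>
      Fintype.piFinset fun i => diagramsWith (d i) (IsZigzag (d i)))

theorem mem_decompositions {k : ℕ} {B : Arcs} {d : Fin k → ℕ} {f : Fin k → Arcs} :
    ⟨k, B, d, f⟩ ∈ decompositions n ↔
      1 ≤ k ∧ k + ∑ i, d i = n ∧ IsZigzag k B ∧ ConnectedOn k B ∧ ∀ i, IsZigzag (d i) (f i) := by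
  simp only [decompositions, mem_sigma, mem_product, mem_Icc, Nat.mem_antidiagonalTuple,
    Fintype.mem_piFinset, mem_diagramsWith_isZigzag, mem_diagramsWith_connected]
  constructor
  · rintro ⟨⟨hk, hkn⟩, hB, hs, hf⟩
    exact ⟨hk, by omega, hB.1, hB.2, hf⟩
  · rintro ⟨hk, hs, hB, hBc, hf⟩
    exact ⟨⟨hk, by omega⟩, ⟨hB, hBc⟩, by omega, hf⟩

theorem card_decompositions :
    (decompositions n).card = ∑ k ∈ Icc 1 n, connZigzagCount k *
      ∑ d ∈ Nat.antidiagonalTuple k (n - k), ∏ i, zigzagCount (d i) := by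
  simp only [decompositions, card_sigma, card_product, Fintype.card_piFinset,
    card_diagramsWith_isZigzag, card_diagramsWith_connected]

end Counting

section Bijection

variable {n : ℕ}

def glueData (t : Σ k, Arcs × Σ _ : Fin k → ℕ, Fin k → Arcs) : Arcs := glue t.2.1 t.2.2.1 t.2.2.2

theorem mapsTo_glueData :
    Set.MapsTo glueData (decompositions n) (diagramsWith n (IsZigzag n)) := by
  rintro ⟨k, B, d, f⟩ ht
  obtain ⟨-, hn, hB, -, hf⟩ := mem_decompositions.1 ht
  exact mem_diagramsWith_isZigzag.2 (hn ▸ isZigzag_glue hB hf)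

/-- The core is recovered as the primary component, then everything else by pulling back. -/
theorem injOn_glueData : Set.InjOn glueData (decompositions n) := by
  rintro ⟨k, B, d, f⟩ ht ⟨k', B', d', f'⟩ ht' h
  obtain ⟨hk, hn, hB, hBc, hf⟩ := mem_decompositions.1 ht
  obtain ⟨hk', hn', hB', hBc', hf'⟩ := mem_decompositions.1 ht'
  have hD : ∀ i, IsDiagram (d i) (f i) := fun i => (hf i).1.1
  have hD' : ∀ i, IsDiagram (d' i) (f' i) := fun i => (hf' i).1.1
  change glue B d f = glue B' d' f' at h
  have himg : (Icc 1 k).image (corePos d) = (Icc 1 k').image (corePos d') := by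
    rw [← primarySet_glue hk hB.1.1 hBc hD, ← primarySet_glue hk' hB'.1.1 hBc' hD', h, hn, hn']
  obtain rfl : k = k' := by
    simpa [card_image_of_injective _ (corePos_strictMono _).injective] using congrArg card himg
  obtain rfl : d = d' := eq_of_image_corePos_eq himg (by omega)
  obtain rfl : B = B' := by
    rw [← pullback_glue_none hB.1.1 hD, h, pullback_glue_none hB'.1.1 hD']
  obtain rfl : f = f' := funext fun i => by
    rw [← pullback_glue_some hB.1.1 hD i, h, pullback_glue_some hB'.1.1 hD' i]
  rfl

theorem surjOn_glueData (hn : 1 ≤ n) :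
    Set.SurjOn glueData (decompositions n) (diagramsWith n (IsZigzag n)) := by
  intro A hA
  replace hA := mem_diagramsWith_isZigzag.1 hA
  have h1 : 1 ∈ primarySet n A := mem_primarySet.2 ⟨mem_Icc.2 ⟨le_rfl, hn⟩, .refl⟩
  obtain ⟨d, hsum, himg⟩ := exists_image_corePos_eq primarySet_subset h1
  refine ⟨⟨_, pullback (corePos d) _ A, d, fun i => pullback (· + corePos d (i + 1)) (d i) A⟩,
    mem_decompositions.2 ⟨card_pos.2 ⟨1, h1⟩, hsum, hA.pullback (corePos_strictMono d),
      connectedOn_pullback (corePos_strictMono d).injective hA.1.1 himg,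
      fun i => hA.pullback (blockEmb_strictMono d (some i))⟩, ?_⟩
  refine Eq.trans ?_ (glueAlong_pullback (σ := blockEmb d) (m := blockSize d)
    fun p hp => exists_block_of_mem hA.1 hsum himg hp)
  exact congrArg (glueAlong (blockEmb d)) (funext fun c => by cases c <;> rfl)

end Bijection

/-- the recurrence
`z(n) = Σ_{k=1}^n c_k Σ_{d₁+⋯+d_k=n−k} z(d₁)⋯z(d_k)` for `n ≥ 1`. -/
theorem zigzag_count_recurrence (n : ℕ) (hn : 1 ≤ n) :
    zigzagCount n =
      ∑ k ∈ Finset.Icc 1 n, connZigzagCount k *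
        ∑ d ∈ Finset.Nat.antidiagonalTuple k (n - k), ∏ i, zigzagCount (d i) := by
  rw [← card_decompositions, ← card_diagramsWith_isZigzag]
  exact (card_nbij glueData mapsTo_glueData injOn_glueData (surjOn_glueData hn)).symm
end Paper
end

section
/- Fix an integer m ≥ 2. For every n ≥ 0, z_m(n) = r_m(n+m−1); equivalently, as formal power series, R_m(x) = 1 + x + x² + ⋯ + x^{m−2} + x^{m−1}·Z_m(x). In particular r_m(n) = 1 for 0 ≤ n ≤ m−1. -/
open PowerSeries

namespace Paper

/- The reduction `θ_m : (i, j) ↦ (i, j − m + 1)` is a bijection from `m`-regular linear stacks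
on `[n + m − 1]` onto `m`-reduced zigzag stacks on `[n]`, with inverse `(i, j) ↦ (i, j + m − 1)`.
Since arcs of a regular stack have length at least `m`, an arc ending at `x` and an arc starting
at `y` with `y < x < y + m` would cross; this is exactly what makes the reduced stack a zigzag
stack satisfying conditions (1) and (2). Conversely, (1) bounds the degrees and (2) rules out
crossings after lengthening the arcs. On `[n]` with `n ≤ m` no arc fits, so `r_m(n) = 1`, and
the generating function identity is the coefficientwise reading of the two facts. -/

theorem _root_.PowerSeries.mk_eq_sum_X_pow_add_X_pow_mul_mk {R : Type*} [CommSemiring R]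
    {f g : ℕ → R} {k : ℕ} (hlow : ∀ n < k, f n = 1) (hhigh : ∀ n, f (n + k) = g n) :
    mk f = ∑ i ∈ Finset.range k, X ^ i + X ^ k * mk g := by
  ext n
  simp only [map_add, map_sum, coeff_X_pow, coeff_X_pow_mul', coeff_mk, Finset.sum_ite_eq,
    Finset.mem_range]
  by_cases hn : n < k
  · rw [if_pos hn, if_neg (by omega), hlow n hn, add_zero]
  · rw [if_neg hn, if_pos (by omega), zero_add, ← hhigh, Nat.sub_add_cancel (by omega)]

theorem _root_.Finset.card_filter_image_of_injOn {α β : Type*} [DecidableEq β] {s : Finset α}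
    {f : α → β} (hf : Set.InjOn f s) (p : β → Prop) [DecidablePred p] :
    ((s.image f).filter p).card = (s.filter fun a => p (f a)).card := by
  rw [Finset.filter_image,
    Finset.card_image_of_injOn (hf.mono (Finset.coe_subset.2 (Finset.filter_subset _ _)))]

def thetaInv (m : ℕ) (A : Arcs) : Arcs := A.image fun p => (p.1, p.2 + m - 1)

lemma ld_pos_iff {A : Arcs} {v : ℕ} : 0 < ld A v ↔ ∃ p ∈ A, p.2 = v := by
  simp [ld, Finset.card_pos, Finset.filter_nonempty_iff]

lemma rd_pos_iff {A : Arcs} {v : ℕ} : 0 < rd A v ↔ ∃ p ∈ A, p.1 = v := by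
  simp [rd, Finset.card_pos, Finset.filter_nonempty_iff]

lemma IsDiagram.ld_zero {n : ℕ} {A : Arcs} (hA : IsDiagram n A) : ld A 0 = 0 := by
  rw [ld, Finset.card_eq_zero, Finset.filter_eq_empty_iff]
  intro p hp
  have := hA p hp
  omega

lemma IsDiagram.rd_eq_zero_of_le {n v : ℕ} {A : Arcs} (hA : IsDiagram n A) (hv : n ≤ v) :
    rd A v = 0 := by
  rw [rd, Finset.card_eq_zero, Finset.filter_eq_empty_iff]
  intro p hp
  have := hA p hp
  omega

lemma IsStack.not_ld_pos_and_rd_pos {m n : ℕ} {A : Arcs} (hA : IsStack n A)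
    (hlen : ∀ p ∈ A, p.1 + m ≤ p.2) {x y : ℕ} (hyx : y < x) (hxy : x < y + m) :
    ¬ (0 < ld A x ∧ 0 < rd A y) := by
  rintro ⟨hl, hr⟩
  obtain ⟨p, hp, rfl⟩ := ld_pos_iff.1 hl
  obtain ⟨q, hq, rfl⟩ := rd_pos_iff.1 hr
  have := hlen p hp
  have := hlen q hq
  exact hA.2 p hp q hq ⟨by omega, hyx, by omega⟩

lemma thetaInv_injOn {n m : ℕ} {A : Arcs} (hA : IsDiagram n A) :
    Set.InjOn (fun p : ℕ × ℕ => (p.1, p.2 + m - 1)) A := by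
  intro p hp q hq hpq
  have := hA p hp
  have := hA q hq
  simp only [Prod.mk.injEq] at hpq
  exact Prod.ext hpq.1 (by omega)

lemma rd_thetaInv {n m : ℕ} {A : Arcs} (hA : IsDiagram n A) (v : ℕ) :
    rd (thetaInv m A) v = rd A v := by
  rw [rd, thetaInv, Finset.card_filter_image_of_injOn (thetaInv_injOn hA)]
  rfl

/-- The truncated subtraction is harmless: for `v + 1 ≤ m` both sides are `0`. -/
lemma ld_thetaInv {n m : ℕ} {A : Arcs} (hA : IsDiagram n A) (v : ℕ) :
    ld (thetaInv m A) v = ld A (v + 1 - m) := by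
  rw [ld, thetaInv, Finset.card_filter_image_of_injOn (thetaInv_injOn hA), ld]
  congr 1
  refine Finset.filter_congr fun p hp => ?_
  have := hA p hp
  omega

lemma theta_injOn {m : ℕ} {A : Arcs} (h : ∀ p ∈ A, m ≤ p.2) :
    Set.InjOn (fun p : ℕ × ℕ => (p.1, p.2 - m + 1)) A := by
  intro p hp q hq hpq
  have := h p hp
  have := h q hq
  simp only [Prod.mk.injEq] at hpq
  exact Prod.ext hpq.1 (by omega)

lemma rd_theta {m : ℕ} {A : Arcs} (h : ∀ p ∈ A, m ≤ p.2) (v : ℕ) :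
    rd (theta m A) v = rd A v := by
  rw [rd, theta, Finset.card_filter_image_of_injOn (theta_injOn h)]
  rfl

lemma ld_theta {m : ℕ} {A : Arcs} (h : ∀ p ∈ A, m + 1 ≤ p.2) (v : ℕ) :
    ld (theta m A) v = ld A (v + m - 1) := by
  have h' : ∀ p ∈ A, m ≤ p.2 := fun p hp => Nat.le_of_succ_le (h p hp)
  rw [ld, theta, Finset.card_filter_image_of_injOn (theta_injOn h'), ld]
  congr 1
  refine Finset.filter_congr fun p hp => ?_
  have := h p hp
  omega

lemma theta_thetaInv {n m : ℕ} {A : Arcs} (hA : IsDiagram n A) :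
    theta m (thetaInv m A) = A := by
  rw [theta, thetaInv, Finset.image_image]
  refine (Finset.image_congr fun p hp => ?_).trans Finset.image_id
  have := hA p hp
  refine Prod.ext rfl ?_
  dsimp only [Function.comp_apply, id_eq]
  omega

lemma thetaInv_theta {m : ℕ} {A : Arcs} (h : ∀ p ∈ A, m ≤ p.2) :
    thetaInv m (theta m A) = A := by
  rw [theta, thetaInv, Finset.image_image]
  refine (Finset.image_congr fun p hp => ?_).trans Finset.image_id
  have := h p hp
  refine Prod.ext rfl ?_
  dsimp only [Function.comp_apply, id_eq]
  omega

lemma MRed.deg_thetaInv_le {m n : ℕ} {A : Arcs} (hA : MRed m n A) (v : ℕ) :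
    deg (thetaInv m A) v ≤ 2 := by
  obtain ⟨⟨⟨hdiag, -⟩, hdeg, -⟩, hcond₁, -⟩ := hA
  have hdeg' : ∀ w, ld A w + rd A w ≤ 2 := hdeg
  rw [deg, ld_thetaInv hdiag, rd_thetaInv hdiag]
  by_cases hv₀ : v + 1 - m = 0
  · have := hdeg' v
    rw [hv₀, hdiag.ld_zero]
    omega
  by_cases hvn : v ≤ n
  · have := hcond₁ (v + 1 - m) (by omega) (by omega)
    rwa [show v + 1 - m + m - 1 = v by omega] at this
  · have := hdeg' (v + 1 - m)
    rw [hdiag.rd_eq_zero_of_le (by omega)]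
    omega

lemma MRed.regLinear_thetaInv {m n : ℕ} (hm : 1 ≤ m) {A : Arcs} (hA : MRed m n A) :
    RegLinear m (n + m - 1) (thetaInv m A) := by
  have hdeg := hA.deg_thetaInv_le
  obtain ⟨⟨⟨hdiag, hcross⟩, -, hzig⟩, -, hcond₂⟩ := hA
  have hlen : ∀ p ∈ thetaInv m A, p.1 + m ≤ p.2 := by
    simp only [thetaInv, Finset.forall_mem_image]
    intro p hp
    have := hdiag p hp
    omega
  refine ⟨⟨?_, ?_⟩, hlen, hdeg⟩
  · simp only [IsDiagram, thetaInv, Finset.forall_mem_image]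
    intro p hp
    have := hdiag p hp
    omega
  · simp only [thetaInv, Finset.forall_mem_image, Crossing]
    rintro p hp q hq ⟨h₁, h₂, h₃⟩
    have hld : 0 < ld A p.2 := ld_pos_iff.2 ⟨p, hp, rfl⟩
    have hrd : 0 < rd A q.1 := rd_pos_iff.2 ⟨q, hq, rfl⟩
    have := hdiag p hp
    have := hdiag q hq
    rcases lt_trichotomy q.1 p.2 with h | h | h
    · exact hcross p hp q hq ⟨h₁, h, by omega⟩
    · exact hzig p.2 ⟨hld, h ▸ hrd⟩
    · have := hcond₂ p.2 q.1 (by omega) h (by omega) hld hrd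
      omega

lemma RegLinear.succ_le_snd {m n : ℕ} {A : Arcs} (hA : RegLinear m n A) :
    ∀ p ∈ A, m + 1 ≤ p.2 := fun p hp => by
  have := hA.1.1 p hp
  have := hA.2.1 p hp
  omega

lemma RegLinear.mred_theta {m n : ℕ} (hm : 2 ≤ m) {A : Arcs}
    (hA : RegLinear m (n + m - 1) A) : MRed m n (theta m A) := by
  have hend := hA.succ_le_snd
  obtain ⟨hstack, hlen, hdeg⟩ := hA
  have ⟨hdiag, hcross⟩ := hstack
  have hld := ld_theta hend
  have hrd := rd_theta fun p hp => Nat.le_of_succ_le (hend p hp)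
  have hsep : ∀ x y, y < x → x < y + m → ¬ (0 < ld A x ∧ 0 < rd A y) :=
    fun x y => hstack.not_ld_pos_and_rd_pos hlen
  refine ⟨⟨⟨fun q hq => ?_, ?_⟩, fun v => ?_, fun v => ?_⟩, fun i _ _ => ?_, ?_⟩
  · obtain ⟨p, hp, rfl⟩ := Finset.mem_image.1 hq
    have := hdiag p hp
    have := hlen p hp
    dsimp only
    omega
  · simp only [theta, Finset.forall_mem_image, Crossing]
    rintro p hp q hq ⟨h₁, h₂, h₃⟩
    have := hend p hp
    have := hend q hq
    exact hcross p hp q hq ⟨h₁, by omega, by omega⟩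
  · have hdeg' : ∀ w, ld A w + rd A w ≤ 2 := hdeg
    rw [deg, hld, hrd]
    by_cases hr : rd A v = 0
    · have := hdeg' (v + m - 1)
      omega
    · have := hdeg' v
      have := hsep (v + m - 1) v (by omega) (by omega)
      omega
  · rw [hld, hrd]
    exact hsep (v + m - 1) v (by omega) (by omega)
  · rw [hld, hrd]
    exact hdeg (i + m - 1)
  · intro i j _ hij _ hi hj
    rw [hld] at hi
    rw [hrd] at hj
    by_contra hji
    exact hsep (i + m - 1) j (by omega) (by omega) ⟨hi, hj⟩

lemma zm_eq_rmc {m : ℕ} (hm : 2 ≤ m) (n : ℕ) : zm m n = rmc m (n + m - 1) :=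
  Nat.card_congr
    { toFun := fun A => ⟨thetaInv m A, A.2.regLinear_thetaInv (one_le_two.trans hm)⟩
      invFun := fun A => ⟨theta m A, A.2.mred_theta hm⟩
      left_inv := fun A => Subtype.ext (theta_thetaInv A.2.1.1.1)
      right_inv := fun A => Subtype.ext <|
        thetaInv_theta fun p hp => Nat.le_of_succ_le (A.2.succ_le_snd p hp) }

lemma regLinear_iff_eq_empty {m n : ℕ} (hn : n ≤ m) {A : Arcs} :
    RegLinear m n A ↔ A = ∅ := by
  refine ⟨fun hA => Finset.eq_empty_of_forall_notMem fun p hp => ?_, ?_⟩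
  · have := hA.1.1 p hp
    have := hA.succ_le_snd p hp
    omega
  · rintro rfl
    simp [RegLinear, IsStack, IsDiagram, deg, ld, rd]

lemma rmc_eq_one {m n : ℕ} (hn : n ≤ m) : rmc m n = 1 := by
  rw [rmc, Nat.card_congr (Equiv.subtypeEquivRight fun A => regLinear_iff_eq_empty hn),
    Nat.card_unique]

/-- `z_m(n) = r_m(n+m−1)` for all `n`; equivalently
`R_m(x) = 1 + x + ⋯ + x^{m−2} + x^{m−1} Z_m(x)`; in particular `r_m(n) = 1` for `n ≤ m−1`. -/
theorem zm_eq_rm_shift (m : ℕ) (hm : 2 ≤ m) :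
    (∀ n : ℕ, zm m n = rmc m (n + m - 1)) ∧
    Rm m = (∑ k ∈ Finset.range (m - 1), Xq ^ k) + Xq ^ (m - 1) * Zm m ∧
    (∀ n : ℕ, n + 1 ≤ m → rmc m n = 1) := by
  refine ⟨zm_eq_rmc hm, ?_, fun n hn => rmc_eq_one (by omega)⟩
  refine PowerSeries.mk_eq_sum_X_pow_add_X_pow_mul_mk (fun n hn => ?_) (fun n => ?_)
  · rw [rmc_eq_one (by omega), Nat.cast_one]
  · rw [zm_eq_rmc hm, show n + (m - 1) = n + m - 1 by omega]
end Paper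
end
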